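/- Let L : ℝ^{pq} → ℝ be twice continuously differentiable with ρ₋‖z‖₂² ≤ zᵀ∇²L(β)z ≤ ρ₊‖z‖₂² for every β and every z with ‖z‖_{0,2} ≤ s, and let W : ℝ^{pq} → ℝ be differentiable, concave, and such that ∇W is η₋-Lipschitz for some η₋ ≥ 0. Then the augmented loss L̃ = L + W satisfies, for all β, β' with |{j : β_j ≠ 0 or β'_j ≠ 0}| ≤ s, ((ρ₋ − η₋)/2)‖β'−β‖₂² ≤ L̃(β') − L̃(β) − ⟨β'−β, ∇L̃(β)⟩ ≤ (ρ₊/2)‖β'−β‖₂². -/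

import Mathlib

open RealInnerProductSpace
noncomputable section

/-- The `j`-th block (in `ℝ^q`) of a vector `β ∈ ℝ^{pq}`. -/
def blk {p q : ℕ} (β : EuclideanSpace ℝ (Fin p × Fin q)) (j : Fin p) :
    EuclideanSpace ℝ (Fin q) := WithLp.toLp 2 (fun k => β (j, k))

/-- The group `ℓ_{0,2}` "norm": the number of nonzero blocks. -/
def blockCount {p q : ℕ} (β : EuclideanSpace ℝ (Fin p × Fin q)) : ℕ :=
  {j : Fin p | blk β j ≠ 0}.ncard

/-!
Write `D f x y = f y - f x - f'(x)(y - x)` (`bregmanDiv` below). Restricted to the segment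
from `β` to `β'`, whose direction `β' - β` has at most `s` nonzero blocks, the Hessian bounds
and Taylor's formula give `ρ₋/2 ‖β' - β‖² ≤ D L β β' ≤ ρ₊/2 ‖β' - β‖²`. Concavity of `W` gives
`D W β β' ≤ 0`, and the `η₋`-Lipschitz gradient gives `D W β β' ≥ -η₋/2 ‖β' - β‖²`. Since `D`
is additive in `f`, summing the two estimates proves the claim.
-/

open AffineMap Set

section OneVariable

variable {g g' g'' : ℝ → ℝ} {c : ℝ}

theorem div_two_le_sub_sub_of_mul_le_deriv_sub (hg : ∀ t, HasDerivAt g (g' t) t)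
    (hc : ∀ t ∈ Icc (0 : ℝ) 1, c * t ≤ g' t - g' 0) : c / 2 ≤ g 1 - g 0 - g' 0 := by
  have hmono : MonotoneOn (fun t => g t - g' 0 * t - c * (t ^ 2 / 2)) (Icc 0 1) := by
    have hderiv (t : ℝ) :
        HasDerivAt (fun t => g t - g' 0 * t - c * (t ^ 2 / 2)) (g' t - g' 0 - c * t) t := by
      have hsq : HasDerivAt (fun t : ℝ => t ^ 2 / 2) t t := by
        simpa using (hasDerivAt_pow 2 t).div_const 2
      exact ((hg t).sub (((hasDerivAt_id t).const_mul (g' 0)).congr_deriv (mul_one _))).sub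
        (hsq.const_mul c)
    refine monotoneOn_of_hasDerivWithinAt_nonneg (convex_Icc 0 1)
      (fun t _ => (hderiv t).continuousAt.continuousWithinAt)
      (fun t _ => (hderiv t).hasDerivWithinAt) fun t ht => ?_
    linarith [hc t (interior_subset ht)]
  have := hmono (left_mem_Icc.2 zero_le_one) (right_mem_Icc.2 zero_le_one) zero_le_one
  linarith

theorem div_two_le_sub_sub_of_le_deriv2 (hg : ∀ t, HasDerivAt g (g' t) t)
    (hg' : ∀ t, HasDerivAt g' (g'' t) t) (hc : ∀ t ∈ Icc (0 : ℝ) 1, c ≤ g'' t) :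
    c / 2 ≤ g 1 - g 0 - g' 0 := by
  refine div_two_le_sub_sub_of_mul_le_deriv_sub hg fun t ht => ?_
  have := (convex_Icc (0 : ℝ) 1).mul_sub_le_image_sub_of_le_deriv
    (fun t _ => (hg' t).continuousAt.continuousWithinAt)
    (fun t _ => (hg' t).differentiableAt.differentiableWithinAt)
    (fun t ht => (hg' t).deriv ▸ hc t (interior_subset ht))
    0 (left_mem_Icc.2 zero_le_one) t ht ht.1
  simpa using this

end OneVariable

section Bregman

variable {E : Type*} [NormedAddCommGroup E] [NormedSpace ℝ E]

def bregmanDiv (f : E → ℝ) (x y : E) : ℝ := f y - f x - fderiv ℝ f x (y - x)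

theorem bregmanDiv_add {f h : E → ℝ} {x : E} (hf : DifferentiableAt ℝ f x)
    (hh : DifferentiableAt ℝ h x) (y : E) :
    bregmanDiv (fun z => f z + h z) x y = bregmanDiv f x y + bregmanDiv h x y := by
  simp only [bregmanDiv, fderiv_fun_add hf hh, add_apply]
  ring

theorem hasDerivAt_comp_lineMap {F : Type*} [NormedAddCommGroup F] [NormedSpace ℝ F]
    {f : E → F} {x y : E} {t : ℝ} (hf : DifferentiableAt ℝ f (lineMap x y t)) :
    HasDerivAt (fun t => f (lineMap x y t)) (fderiv ℝ f (lineMap x y t) (y - x)) t :=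
  hf.hasFDerivAt.comp_hasDerivAt t hasDerivAt_lineMap

theorem ContDiff.hasDerivAt_fderiv_comp_lineMap {f : E → ℝ} (hf : ContDiff ℝ 2 f) (x y : E)
    (t : ℝ) : HasDerivAt (fun t => fderiv ℝ f (AffineMap.lineMap x y t) (y - x))
      (iteratedFDeriv ℝ 2 f (AffineMap.lineMap x y t) ![y - x, y - x]) t := by
  have hf' : Differentiable ℝ (fderiv ℝ f) :=
    (hf.fderiv_right (m := 1) (by norm_num)).differentiable (by norm_num)
  rw [iteratedFDeriv_two_apply]
  simpa using (hasDerivAt_comp_lineMap (hf' _)).clm_apply (hasDerivAt_const t (y - x))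

theorem ContDiff.div_two_le_bregmanDiv {f : E → ℝ} (hf : ContDiff ℝ 2 f) {x y : E} {c : ℝ}
    (hc : ∀ t ∈ Icc (0 : ℝ) 1,
      c ≤ iteratedFDeriv ℝ 2 f (AffineMap.lineMap x y t) ![y - x, y - x]) :
    c / 2 ≤ bregmanDiv f x y := by
  have := div_two_le_sub_sub_of_le_deriv2
    (fun t => hasDerivAt_comp_lineMap (hf.differentiable (by norm_num) _))
    (hf.hasDerivAt_fderiv_comp_lineMap x y) hc
  simpa [bregmanDiv] using this

theorem ContDiff.bregmanDiv_le_div_two {f : E → ℝ} (hf : ContDiff ℝ 2 f) {x y : E} {C : ℝ}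
    (hC : ∀ t ∈ Icc (0 : ℝ) 1,
      iteratedFDeriv ℝ 2 f (AffineMap.lineMap x y t) ![y - x, y - x] ≤ C) :
    bregmanDiv f x y ≤ C / 2 := by
  have := div_two_le_sub_sub_of_le_deriv2
    (fun t => (hasDerivAt_comp_lineMap (hf.differentiable (by norm_num) _)).neg)
    (fun t => (hf.hasDerivAt_fderiv_comp_lineMap x y t).neg) (c := -C)
    fun t ht => neg_le_neg (hC t ht)
  simp only [Pi.neg_apply, AffineMap.lineMap_apply_zero, AffineMap.lineMap_apply_one] at this
  rw [bregmanDiv]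
  linarith

theorem ConcaveOn.bregmanDiv_nonpos {f : E → ℝ} (hf : ConcaveOn ℝ univ f) {x : E}
    (hx : DifferentiableAt ℝ f x) (y : E) : bregmanDiv f x y ≤ 0 := by
  have hline : ConcaveOn ℝ univ (fun t => f (lineMap x y t)) :=
    hf.comp_affineMap (lineMap x y)
  have := hline.slope_le_of_hasDerivAt (mem_univ 0) (mem_univ 1) zero_lt_one
    (hasDerivAt_comp_lineMap (t := 0) (by rwa [lineMap_apply_zero]))
  simp only [slope_def_field, lineMap_apply_zero, lineMap_apply_one] at this
  rw [bregmanDiv]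
  linarith

end Bregman

section Gradient

variable {E : Type*} [NormedAddCommGroup E] [InnerProductSpace ℝ E] [CompleteSpace E]

theorem inner_gradient_eq_fderiv {f : E → ℝ} (x v : E) : ⟪v, gradient f x⟫ = fderiv ℝ f x v := by
  rw [real_inner_comm, inner_gradient_left]

theorem LipschitzWith.neg_div_two_le_bregmanDiv {f : E → ℝ} {K : NNReal}
    (hf : Differentiable ℝ f) (hK : LipschitzWith K (gradient f)) (x y : E) :
    -(K * ‖y - x‖ ^ 2) / 2 ≤ bregmanDiv f x y := by
  have hderiv_sub (t : ℝ) (ht : t ∈ Icc (0 : ℝ) 1) :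
      -(K * ‖y - x‖ ^ 2) * t ≤ fderiv ℝ f (lineMap x y t) (y - x) - fderiv ℝ f x (y - x) := by
    have hgrad : ‖gradient f (lineMap x y t) - gradient f x‖ ≤ K * (t * ‖y - x‖) := by
      simpa [dist_eq_norm, lineMap_apply_module', norm_smul, abs_of_nonneg ht.1] using
        hK.dist_le_mul (lineMap x y t) x
    have hcs := abs_real_inner_le_norm (gradient f (lineMap x y t) - gradient f x) (y - x)
    rw [inner_sub_left, real_inner_comm, inner_gradient_eq_fderiv, real_inner_comm,
      inner_gradient_eq_fderiv] at hcs
    nlinarith [neg_abs_le (fderiv ℝ f (lineMap x y t) (y - x) - fderiv ℝ f x (y - x)),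
      mul_le_mul_of_nonneg_right hgrad (norm_nonneg (y - x))]
  have := div_two_le_sub_sub_of_mul_le_deriv_sub
    (fun t => hasDerivAt_comp_lineMap (x := x) (y := y) (hf _))
    fun t ht => by rw [lineMap_apply_zero]; exact hderiv_sub t ht
  simpa [bregmanDiv] using this

end Gradient

theorem blk_sub {p q : ℕ} (β β' : EuclideanSpace ℝ (Fin p × Fin q)) (j : Fin p) :
    blk (β' - β) j = blk β' j - blk β j := rfl

theorem blockCount_sub_le {p q : ℕ} (β β' : EuclideanSpace ℝ (Fin p × Fin q)) :
    blockCount (β' - β) ≤ {j : Fin p | blk β j ≠ 0 ∨ blk β' j ≠ 0}.ncard := by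
  refine ncard_le_ncard (fun j hj => ?_) (toFinite _)
  by_contra h
  simp_all [blk_sub]

theorem augmented_loss_rsc_rs_general {p q : ℕ} (s : ℕ)
    (L W : EuclideanSpace ℝ (Fin p × Fin q) → ℝ) (hL : ContDiff ℝ 2 L)
    (ρm ρp : ℝ)
    (hHess : ∀ β z : EuclideanSpace ℝ (Fin p × Fin q), blockCount z ≤ s →
      ρm * ‖z‖ ^ 2 ≤ iteratedFDeriv ℝ 2 L β ![z, z] ∧
        iteratedFDeriv ℝ 2 L β ![z, z] ≤ ρp * ‖z‖ ^ 2)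
    (hW : Differentiable ℝ W) (hWconc : ConcaveOn ℝ Set.univ W)
    (η : ℝ) (hη : 0 ≤ η) (hWLip : LipschitzWith η.toNNReal (gradient W))
    (β β' : EuclideanSpace ℝ (Fin p × Fin q))
    (hsupp : {j : Fin p | blk β j ≠ 0 ∨ blk β' j ≠ 0}.ncard ≤ s) :
    (ρm - η) / 2 * ‖β' - β‖ ^ 2 ≤
        (L β' + W β') - (L β + W β) -
          ⟪β' - β, gradient (fun b => L b + W b) β⟫ ∧
      (L β' + W β') - (L β + W β) -
          ⟪β' - β, gradient (fun b => L b + W b) β⟫ ≤ ρp / 2 * ‖β' - β‖ ^ 2 := by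
  have hsparse : blockCount (β' - β) ≤ s := (blockCount_sub_le β β').trans hsupp
  have hLlow := hL.div_two_le_bregmanDiv fun t _ => (hHess (lineMap β β' t) _ hsparse).1
  have hLup := hL.bregmanDiv_le_div_two fun t _ => (hHess (lineMap β β' t) _ hsparse).2
  have hWup := hWconc.bregmanDiv_nonpos (hW β) β'
  have hWlow := hWLip.neg_div_two_le_bregmanDiv hW β β'
  rw [Real.coe_toNNReal η hη] at hWlow
  have hsplit : (L β' + W β') - (L β + W β) - ⟪β' - β, gradient (fun b => L b + W b) β⟫ =
      bregmanDiv L β β' + bregmanDiv W β β' := by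
    rw [inner_gradient_eq_fderiv, ← bregmanDiv_add (hL.differentiable (by norm_num) β) (hW β)]
    rfl
  rw [hsplit]
  constructor <;> linarith

/-- Restricted strong convexity / smoothness of the augmented loss `L̃ = L + W`,
where `W` is differentiable, concave with `η₋`-Lipschitz gradient. -/
theorem augmented_loss_rsc_rs {p q : ℕ} (s : ℕ) (hs : 0 < s)
    (L W : EuclideanSpace ℝ (Fin p × Fin q) → ℝ) (hL : ContDiff ℝ 2 L)
    (ρm ρp : ℝ)
    (hHess : ∀ β z : EuclideanSpace ℝ (Fin p × Fin q), blockCount z ≤ s →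
      ρm * ‖z‖ ^ 2 ≤ iteratedFDeriv ℝ 2 L β ![z, z] ∧
        iteratedFDeriv ℝ 2 L β ![z, z] ≤ ρp * ‖z‖ ^ 2)
    (hW : Differentiable ℝ W) (hWconc : ConcaveOn ℝ Set.univ W)
    (η : ℝ) (hη : 0 ≤ η) (hWLip : LipschitzWith η.toNNReal (gradient W))
    (β β' : EuclideanSpace ℝ (Fin p × Fin q))
    (hsupp : {j : Fin p | blk β j ≠ 0 ∨ blk β' j ≠ 0}.ncard ≤ s) :
    (ρm - η) / 2 * ‖β' - β‖ ^ 2 ≤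
        (L β' + W β') - (L β + W β) -
          ⟪β' - β, gradient (fun b => L b + W b) β⟫ ∧
      (L β' + W β') - (L β + W β) -
          ⟪β' - β, gradient (fun b => L b + W b) β⟫ ≤ ρp / 2 * ‖β' - β‖ ^ 2 :=
  augmented_loss_rsc_rs_general s L W hL ρm ρp hHess hW hWconc η hη hWLip β β' hsupp
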